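/- arXiv:2204.10403 — 6 statements merged into one kernel-verified Lean document; each statement's English description precedes it below -/
import Mathlib

section
/- Let S be a symmetric positive definite p×p real matrix, let λ > 0, and let P be a partition of {1,…,p} such that |S_ij| ≤ λ for every cross-block pair (i,j). Then every symmetric positive definite matrix Θ̂ that maximizes the Glasso objective logdet Θ − tr(ΘS) − λ Σ_{i≠j}|Θ_ij| over symmetric positive definite matrices satisfies Θ̂_ij = 0 for every cross-block pair (i,j); that is, the Glasso solution is block diagonal with respect to P. -/
/-!
Let `D` be the block-diagonal part of `Θ̂`. It is positive definite, and `D⁻¹` is again block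
diagonal, so `tr(D⁻¹ Θ̂) = tr(D⁻¹ D) = p`. The tangent inequality for the strictly concave
`log det` at `D` then gives `log det Θ̂ < log det D` unless `Θ̂ = D` (strict Fischer inequality).
Passing from `Θ̂` to `D` changes the other terms only at cross-block pairs, where
`Θ̂_ab S_ba + λ |Θ̂_ab| ≥ 0` is replaced by `0`. Hence a maximizer with a nonzero cross-block
entry would be beaten by `D`.
-/

/-- The Glasso objective `logdet Θ − tr(Θ S) − λ Σ_{i≠j} |Θ_ij|`. -/
noncomputable def glassoObj {p : ℕ} (S : Matrix (Fin p) (Fin p) ℝ) (lam : ℝ)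
    (Θ : Matrix (Fin p) (Fin p) ℝ) : ℝ :=
  Real.log Θ.det - (Θ * S).trace - lam * ∑ i, ∑ j, if i ≠ j then |Θ i j| else 0

open Matrix
open scoped ComplexOrder

namespace Matrix

variable {n ι α 𝕜 : Type*} [DecidableEq ι]

def blockDiagPart [Zero α] (blk : n → ι) (A : Matrix n n α) : Matrix n n α :=
  of fun i j => if blk i = blk j then A i j else 0

def IsBlockDiagonal [Zero α] (blk : n → ι) (M : Matrix n n α) : Prop :=
  ∀ i j, blk i ≠ blk j → M i j = 0

lemma isBlockDiagonal_blockDiagPart [Zero α] (blk : n → ι) (A : Matrix n n α) :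
    IsBlockDiagonal blk (blockDiagPart blk A) :=
  fun _ _ h => if_neg h

@[simp]
lemma trace_blockDiagPart [Fintype n] [AddCommMonoid α] (blk : n → ι) (A : Matrix n n α) :
    (blockDiagPart blk A).trace = A.trace := by
  simp [trace, blockDiagPart]

lemma blockDiagPart_one [DecidableEq n] [Zero α] [One α] (blk : n → ι) :
    blockDiagPart blk (1 : Matrix n n α) = 1 := by
  ext i j
  by_cases h : i = j <;> simp [blockDiagPart, one_apply, h]

lemma IsBlockDiagonal.blockDiagPart_mul [Fintype n] [NonUnitalNonAssocSemiring α]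
    {blk : n → ι} {M : Matrix n n α} (hM : IsBlockDiagonal blk M) (A : Matrix n n α) :
    blockDiagPart blk (M * A) = M * blockDiagPart blk A := by
  ext i j
  simp only [blockDiagPart, of_apply, mul_apply]
  split_ifs with hij
  · refine Finset.sum_congr rfl fun k _ => ?_
    by_cases hik : blk i = blk k
    · rw [if_pos (hik ▸ hij)]
    · rw [hM i k hik, zero_mul, zero_mul]
  · refine (Finset.sum_eq_zero fun k _ => ?_).symm
    by_cases hik : blk i = blk k
    · rw [if_neg (hik ▸ hij), mul_zero]
    · rw [hM i k hik, zero_mul]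

lemma IsBlockDiagonal.trace_mul_blockDiagPart [Fintype n] [NonUnitalNonAssocSemiring α]
    {blk : n → ι} {M : Matrix n n α} (hM : IsBlockDiagonal blk M) (A : Matrix n n α) :
    (M * blockDiagPart blk A).trace = (M * A).trace := by
  rw [← hM.blockDiagPart_mul, trace_blockDiagPart]

lemma IsBlockDiagonal.inv [Fintype n] [DecidableEq n] [CommRing α] {blk : n → ι}
    {M : Matrix n n α} (hM : IsBlockDiagonal blk M) : IsBlockDiagonal blk M⁻¹ := by
  by_cases hMu : IsUnit M.det
  · have : M * blockDiagPart blk M⁻¹ = 1 := by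
      rw [← hM.blockDiagPart_mul, mul_nonsing_inv _ hMu, blockDiagPart_one]
    rw [inv_eq_right_inv this]
    exact isBlockDiagonal_blockDiagPart blk _
  · rw [nonsing_inv_apply_not_isUnit _ hMu]
    exact fun _ _ _ => rfl

lemma PosDef.blockDiagPart [Fintype n] [DecidableEq n] [RCLike 𝕜] {A : Matrix n n 𝕜}
    (hA : A.PosDef) (blk : n → ι) : (Matrix.blockDiagPart blk A).PosDef := by
  have hpsd : (Matrix.blockDiagPart blk A).PosSemidef := by
    have : Matrix.blockDiagPart blk A = A ⊙ (1 : Matrix ι ι 𝕜).submatrix blk blk := by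
      ext i j
      by_cases h : blk i = blk j <;> simp [Matrix.blockDiagPart, hadamard_apply, one_apply, h]
    rw [this]
    exact hA.posSemidef.hadamard (PosSemidef.one.submatrix blk)
  -- A kernel vector `x` restricted to the block of `i` is annihilated by the quadratic form of `A`.
  refine hpsd.posDef_iff_isUnit.mpr (mulVec_injective_iff_isUnit.mp ?_)
  rw [← coe_mulVecLin, ← LinearMap.ker_eq_bot, LinearMap.ker_eq_bot']
  intro x hx
  rw [mulVecLin_apply] at hx
  funext i
  set y : n → 𝕜 := fun j => if blk j = blk i then x j else 0
  have hAy : ∀ k, blk k = blk i → (A *ᵥ y) k = (Matrix.blockDiagPart blk A *ᵥ x) k := by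
    intro k hk
    simp only [mulVec, dotProduct, Matrix.blockDiagPart, of_apply, y, hk, mul_ite, ite_mul,
      mul_zero, zero_mul]
    simp_rw [eq_comm (a := blk i)]
  have hyAy : star y ⬝ᵥ A *ᵥ y = 0 := by
    refine Finset.sum_eq_zero fun k _ => ?_
    by_cases hk : blk k = blk i
    · rw [hAy k hk, hx, Pi.zero_apply, mul_zero]
    · simp [y, hk]
  have hy : y = 0 := by
    by_contra h
    exact (hA.dotProduct_mulVec_pos h).ne' hyAy
  simpa [y] using congrFun hy i

section LogDet

variable [Fintype n] [DecidableEq n]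

lemma PosDef.log_det_lt_trace_sub_card {M : Matrix n n ℝ} (hM : M.PosDef) (hne : M ≠ 1) :
    Real.log M.det < M.trace - Fintype.card n := by
  have hH : M.IsHermitian := hM.1
  set μ := hH.eigenvalues
  have hμ : ∃ i, μ i ≠ 1 := by
    by_contra! h
    refine hne ?_
    have hdiag : diagonal (RCLike.ofReal ∘ μ : n → ℝ) = 1 := by
      rw [← diagonal_one]; congr 1; funext i; simp [h i]
    rw [hH.spectral_theorem, hdiag, Unitary.conjStarAlgAut_apply, mul_one]
    exact mem_unitaryGroup_iff.mp hH.eigenvectorUnitary.2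
  obtain ⟨i₀, hi₀⟩ := hμ
  have hlog : Real.log M.det = ∑ i, Real.log (μ i) := by
    rw [hH.det_eq_prod_eigenvalues]
    exact Real.log_prod fun i _ => (hM.eigenvalues_pos i).ne'
  have htr : M.trace - Fintype.card n = ∑ i, (μ i - 1) := by
    simp [hH.trace_eq_sum_eigenvalues, Finset.sum_sub_distrib, μ]
  rw [hlog, htr]
  exact Finset.sum_lt_sum (fun i _ => Real.log_le_sub_one_of_pos (hM.eigenvalues_pos i))
    ⟨i₀, Finset.mem_univ _, Real.log_lt_sub_one_of_pos (hM.eigenvalues_pos i₀) hi₀⟩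

open scoped MatrixOrder in
lemma PosDef.log_det_lt_log_det_add_trace {X Y : Matrix n n ℝ} (hX : X.PosDef) (hY : Y.PosDef)
    (hne : X ≠ Y) :
    Real.log X.det < Real.log Y.det + (Y⁻¹ * X).trace - Fintype.card n := by
  -- `C = Y^(-1/2)`: then `C X C` has determinant `det X / det Y` and trace `tr (Y⁻¹ X)`.
  set C := CFC.sqrt Y⁻¹
  have hCC : C * C = Y⁻¹ := CFC.sqrt_mul_sqrt_self _ hY.inv.posSemidef.nonneg
  have hCsymm : Cᴴ = C := (CFC.sqrt_nonneg Y⁻¹).posSemidef.1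
  have hYd : IsUnit Y.det := hY.det_pos.ne'.isUnit
  have hCd : IsUnit C.det := by
    refine isUnit_of_mul_isUnit_left (y := C.det) ?_
    rw [← det_mul, hCC]
    exact hY.inv.det_pos.ne'.isUnit
  have hM : (C * X * C).PosDef := by
    have := hX.conjTranspose_mul_mul_same
      (mulVec_injective_iff_isUnit.mpr ((isUnit_iff_isUnit_det C).mpr hCd))
    rwa [hCsymm] at this
  have hMne : C * X * C ≠ 1 := by
    intro h
    apply hne
    calc X = Y * (Y⁻¹ * X * Y⁻¹) * Y := by
            rw [mul_assoc, nonsing_inv_mul_cancel_right _ _ hYd,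
              mul_nonsing_inv_cancel_left _ _ hYd]
      _ = Y * (C * (C * X * C) * C) * Y := by rw [← hCC]; simp only [mul_assoc]
      _ = Y := by rw [h, mul_one, hCC, mul_nonsing_inv _ hYd, one_mul]
  have hdet : (C * X * C).det = X.det / Y.det := by
    rw [det_mul, det_mul, mul_comm (C.det), mul_assoc, ← det_mul, hCC, det_nonsing_inv,
      Ring.inverse_eq_inv', div_eq_mul_inv]
  have htr : (C * X * C).trace = (Y⁻¹ * X).trace := by
    rw [trace_mul_cycle, hCC]
  have := hM.log_det_lt_trace_sub_card hMne
  rw [hdet, htr, Real.log_div hX.det_pos.ne' hY.det_pos.ne'] at this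
  linarith

lemma PosDef.log_det_lt_log_det_blockDiagPart {A : Matrix n n ℝ} (hA : A.PosDef)
    (blk : n → ι) (hne : A ≠ Matrix.blockDiagPart blk A) :
    Real.log A.det < Real.log (Matrix.blockDiagPart blk A).det := by
  have hD := hA.blockDiagPart blk
  have htr : ((Matrix.blockDiagPart blk A)⁻¹ * A).trace = Fintype.card n := by
    rw [← (isBlockDiagonal_blockDiagPart blk A).inv.trace_mul_blockDiagPart,
      nonsing_inv_mul _ hD.det_pos.ne'.isUnit, trace_one]
  linarith [hA.log_det_lt_log_det_add_trace hD hne]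

end LogDet

end Matrix

lemma glassoObj_eq {p : ℕ} (S : Matrix (Fin p) (Fin p) ℝ) (lam : ℝ)
    (Θ : Matrix (Fin p) (Fin p) ℝ) :
    glassoObj S lam Θ =
      Real.log Θ.det - ∑ a, ∑ b, (Θ a b * S b a + if a ≠ b then lam * |Θ a b| else 0) := by
  simp only [glassoObj, trace, diag, mul_apply, Finset.mul_sum, Finset.sum_add_distrib, mul_ite,
    mul_zero]
  ring

lemma glassoObj_lt_glassoObj_blockDiagPart {p : ℕ} {ι : Type*} [DecidableEq ι]
    (S : Matrix (Fin p) (Fin p) ℝ) (lam : ℝ) (blk : Fin p → ι)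
    (hS : ∀ i j, blk i ≠ blk j → |S i j| ≤ lam) {Θ : Matrix (Fin p) (Fin p) ℝ} (hΘ : Θ.PosDef)
    (hne : Θ ≠ blockDiagPart blk Θ) :
    glassoObj S lam Θ < glassoObj S lam (blockDiagPart blk Θ) := by
  have hlinear : ∑ a, ∑ b, (blockDiagPart blk Θ a b * S b a +
        if a ≠ b then lam * |blockDiagPart blk Θ a b| else 0) ≤
      ∑ a, ∑ b, (Θ a b * S b a + if a ≠ b then lam * |Θ a b| else 0) := by
    refine Finset.sum_le_sum fun a _ => Finset.sum_le_sum fun b _ => ?_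
    by_cases hab : blk a = blk b
    · simp [blockDiagPart, hab]
    · have hSab := hS b a (Ne.symm hab)
      have : a ≠ b := fun h => hab (congrArg blk h)
      simp only [blockDiagPart, of_apply, if_neg hab, zero_mul, abs_zero, mul_zero, if_pos this,
        add_zero]
      nlinarith [neg_abs_le (Θ a b * S b a), abs_mul (Θ a b) (S b a), abs_nonneg (Θ a b)]
  rw [glassoObj_eq, glassoObj_eq]
  linarith [hΘ.log_det_lt_log_det_blockDiagPart blk hne]

theorem glasso_block_diagonal_general {p : ℕ} {ι : Type*}
    (S : Matrix (Fin p) (Fin p) ℝ)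
    (lam : ℝ) (blk : Fin p → ι)
    (hS : ∀ i j : Fin p, blk i ≠ blk j → |S i j| ≤ lam)
    (Θhat : Matrix (Fin p) (Fin p) ℝ) (hΘpd : Θhat.PosDef)
    (hmax : ∀ Θ : Matrix (Fin p) (Fin p) ℝ, Θ.IsSymm → Θ.PosDef →
      glassoObj S lam Θ ≤ glassoObj S lam Θhat) :
    ∀ i j : Fin p, blk i ≠ blk j → Θhat i j = 0 := by
  classical
  intro i j hij
  by_contra hΘij
  have hne : Θhat ≠ blockDiagPart blk Θhat :=
    fun h => hΘij ((congr_fun₂ h i j).trans (if_neg hij))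
  have hD := hΘpd.blockDiagPart blk
  have hDsymm : (blockDiagPart blk Θhat).IsSymm :=
    (conjTranspose_eq_transpose_of_trivial _).symm.trans hD.1
  exact (hmax _ hDsymm hD).not_gt (glassoObj_lt_glassoObj_blockDiagPart S lam blk hS hΘpd hne)

/-- let `S` be symmetric positive definite, `λ > 0`, and let a partition of
`{1,…,p}` be given by the fibers of a block-labelling function `blk`. If `|S_ij| ≤ λ`
for every cross-block pair `(i,j)` (i.e. whenever `blk i ≠ blk j`), then every symmetric
positive definite maximizer `Θ̂` of the Glasso objective over symmetric positive definite
matrices satisfies `Θ̂_ij = 0` for every cross-block pair: the Glasso solution is block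
diagonal with respect to the partition. -/
theorem glasso_block_diagonal {p : ℕ} {ι : Type*}
    (S : Matrix (Fin p) (Fin p) ℝ) (hSsymm : S.IsSymm) (hSpd : S.PosDef)
    (lam : ℝ) (hlam : 0 < lam) (blk : Fin p → ι)
    (hS : ∀ i j : Fin p, blk i ≠ blk j → |S i j| ≤ lam)
    (Θhat : Matrix (Fin p) (Fin p) ℝ) (hΘsymm : Θhat.IsSymm) (hΘpd : Θhat.PosDef)
    (hmax : ∀ Θ : Matrix (Fin p) (Fin p) ℝ, Θ.IsSymm → Θ.PosDef →
      glassoObj S lam Θ ≤ glassoObj S lam Θhat) :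
    ∀ i j : Fin p, blk i ≠ blk j → Θhat i j = 0 :=
  glasso_block_diagonal_general S lam blk hS Θhat hΘpd hmax
end

section
/- Let S be a symmetric positive definite p×p real matrix, m = p(p−1)/2, and λ ∈ ℝ^m with λ_1 ≥ ⋯ ≥ λ_m > 0. For a symmetric p×p matrix U define J^D_λ(U) = sup{ tr(UΘ) : Θ symmetric p×p, J_λ(Θ) ≤ 1 } ∈ [0,∞]. Then the primal Gslope optimal value and the dual optimal value satisfy sup{ logdet Θ − tr(ΘS) − J_λ(Θ) : Θ symmetric positive definite } = −p − sup{ logdet W : W symmetric positive definite, J^D_λ(W − S) ≤ 1 }. -/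
/-!
Relax the dual feasible set to the `W ⪰ 0` with `tr ((W - S) Θ) ≤ J_λ(Θ)` for all symmetric `Θ`.
Testing against diagonal `Θ`, on which `J_λ` vanishes, forces `diag W = diag S`, so this set is
compact and `det` attains its maximum on it at some `W`, positive definite because
`det W ≥ det S > 0`. Let `U` be a subgradient of `J_λ` at `W⁻¹`. The segment from `W` towards
`S + U` stays feasible, and `det` increases along it to first order unless
`tr ((W - S) W⁻¹) = J_λ(W⁻¹)`. With this equality `Θ = W⁻¹` attains `-p - log det W` in the primal
problem, while `log det Θ + log det W ≤ tr (Θ W) - p` shows that no `Θ` does better.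
-/

/-- The sorted-ℓ1 (SLOPE) norm of the vector of upper-triangular off-diagonal entries of
a `p×p` matrix `Θ`, with weight vector `λ` of length `m = p(p−1)/2`: for `λ`
nonincreasing and nonnegative this equals (by the rearrangement inequality) the maximum
over all enumerations of the upper-triangular pairs of `Σ_k λ_k |Θ_(i_k,j_k)|`. -/
noncomputable def slopeNormMat {p : ℕ} (lam : Fin (p * (p - 1) / 2) → ℝ)
    (Θ : Matrix (Fin p) (Fin p) ℝ) : ℝ :=
  ⨆ f : Fin (p * (p - 1) / 2) ≃ {q : Fin p × Fin p // q.1 < q.2},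
    ∑ k, lam k * |Θ (f k).val.1 (f k).val.2|

/-- The dual functional `J^D_λ(U) = sup { tr(U Θ) : Θ symmetric, J_λ(Θ) ≤ 1 } ∈ [0,∞]`,
valued in the extended reals. -/
noncomputable def slopeDualNorm {p : ℕ} (lam : Fin (p * (p - 1) / 2) → ℝ)
    (U : Matrix (Fin p) (Fin p) ℝ) : EReal :=
  sSup {x : EReal | ∃ Θ : Matrix (Fin p) (Fin p) ℝ,
    Θ.IsSymm ∧ slopeNormMat lam Θ ≤ 1 ∧ x = ((U * Θ).trace : ℝ)}

open Matrix Filter Topology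
open scoped MatrixOrder

lemma sign_mul_le_abs (x y : ℝ) : (SignType.sign x : ℝ) * y ≤ |y| := by
  rcases lt_trichotomy x 0 with hx | hx | hx <;> simp [hx, neg_le_abs, le_abs_self]

lemma HasDerivAt.eventually_nhdsGT_lt {f : ℝ → ℝ} {f' x : ℝ} (hf : HasDerivAt f f' x)
    (hf' : 0 < f') : ∀ᶠ t in 𝓝[>] x, f x < f t := by
  filter_upwards [((hasDerivAt_iff_tendsto_slope.mp hf).mono_left (nhdsGT_le_nhdsNE x)).eventually
    (lt_mem_nhds hf'), self_mem_nhdsWithin] with t hslope ht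
  rw [slope_def_field] at hslope
  exact sub_pos.mp ((div_pos_iff_of_pos_right (sub_pos.mpr ht)).mp hslope)

namespace Matrix

variable {n : Type*}

lemma PosDef.isSymm {A : Matrix n n ℝ} (hA : A.PosDef) : A.IsSymm :=
  isHermitian_iff_isSymm.mp hA.1

variable [Fintype n]

lemma trace_transpose_mul_of_isSymm {R : Type*} [CommSemiring R] (U : Matrix n n R)
    {B : Matrix n n R} (hB : B.IsSymm) : (Uᵀ * B).trace = (U * B).trace := by
  rw [← trace_transpose, transpose_mul, transpose_transpose, hB.eq, trace_mul_comm]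

lemma PosSemidef.two_mul_abs_apply_le {A : Matrix n n ℝ} (hA : A.PosSemidef) (i j : n) :
    2 * |A i j| ≤ A i i + A j j := by
  classical
  rcases eq_or_ne i j with rfl | hij
  · rw [abs_of_nonneg hA.diag_nonneg]; linarith
  have hsymm : A j i = A i j := hA.1.apply i j
  have quad (s : ℝ) : 0 ≤ A i i + 2 * s * A i j + s ^ 2 * A j j := by
    have := hA.dotProduct_mulVec_nonneg (Pi.single i 1 + Pi.single j s)
    simp [mulVec_add, dotProduct_add, add_dotProduct, mulVec_single, hsymm] at this
    linarith
  rcases abs_cases (A i j) with ⟨h, _⟩ | ⟨h, _⟩ <;> rw [h]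
  · linarith [quad (-1)]
  · linarith [quad 1]

lemma isClosed_setOf_posSemidef : IsClosed {A : Matrix n n ℝ | A.PosSemidef} := by
  simp only [posSemidef_iff_dotProduct_mulVec, Set.ofPred_and, Set.ofPred_forall]
  exact (isClosed_eq continuous_id.matrix_conjTranspose continuous_id).inter
    (isClosed_iInter fun x => isClosed_le continuous_const (by fun_prop))

lemma PosDef.eventually_posDef_add_smul {A M : Matrix n n ℝ} (hA : A.PosDef)
    (hM : M.IsHermitian) : ∀ᶠ t : ℝ in 𝓝 0, (A + t • M).PosDef := by
  let q : ℝ × (n → ℝ) → ℝ := fun z => z.2 ⬝ᵥ ((A + z.1 • M) *ᵥ z.2)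
  have hq : Continuous q := by fun_prop
  -- tube lemma: `q` stays positive near `{0} × sphere`, and `q t` is homogeneous of degree 2
  have hsphere : ∀ᶠ t : ℝ in 𝓝 0, ∀ y ∈ Metric.sphere (0 : n → ℝ) 1, 0 < q (t, y) :=
    (isCompact_sphere 0 1).eventually_forall_of_forall_eventually fun y hy =>
      continuousAt_const.eventually_lt hq.continuousAt (by
        simpa [q] using hA.dotProduct_mulVec_pos (ne_zero_of_mem_unit_sphere ⟨y, hy⟩))
  filter_upwards [hsphere] with t ht
  refine .of_dotProduct_mulVec_pos (hA.1.add (hM.smul (IsSelfAdjoint.all t))) fun x hx => ?_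
  have hx' : 0 < ‖x‖ := norm_pos_iff.mpr hx
  have := ht (‖x‖⁻¹ • x) (by simp [norm_smul, hx'.ne'])
  simp only [q, mulVec_smul, dotProduct_smul, smul_dotProduct, smul_eq_mul] at this
  simpa using pos_of_mul_pos_right (pos_of_mul_pos_right this (by positivity)) (by positivity)

variable [DecidableEq n]

open Polynomial in
lemma hasDerivAt_det_one_add_smul {𝕜 : Type*} [NontriviallyNormedField 𝕜] (N : Matrix n n 𝕜) :
    HasDerivAt (fun t : 𝕜 => (1 + t • N).det) N.trace 0 := by
  have h : (fun t : 𝕜 => (1 + t • N).det) = fun t => (det (1 + (X : 𝕜[X]) • N.map C)).eval t := by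
    funext t
    simp [eval_det, ← smul_eq_mul_diagonal]
  rw [h, ← derivative_det_one_add_X_smul]
  exact Polynomial.hasDerivAt _ 0

lemma hasDerivAt_det_add_smul {𝕜 : Type*} [NontriviallyNormedField 𝕜] {A : Matrix n n 𝕜}
    (hA : IsUnit A.det) (M : Matrix n n 𝕜) :
    HasDerivAt (fun t : 𝕜 => (A + t • M).det) (A.det * (A⁻¹ * M).trace) 0 := by
  have h : (fun t : 𝕜 => (A + t • M).det) = fun t => A.det * (1 + t • (A⁻¹ * M)).det := by
    funext t
    rw [← det_mul, mul_add, mul_one, Matrix.mul_smul, mul_nonsing_inv_cancel_left _ _ hA]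
  rw [h]
  exact (hasDerivAt_det_one_add_smul _).const_mul _

lemma PosDef.log_det_le_trace_sub_card {A : Matrix n n ℝ} (hA : A.PosDef) :
    Real.log A.det ≤ A.trace - Fintype.card n := by
  rw [hA.1.det_eq_prod_eigenvalues, hA.1.trace_eq_sum_eigenvalues]
  simp only [RCLike.ofReal_real_eq_id, id_eq]
  rw [Real.log_prod fun i _ => (hA.eigenvalues_pos i).ne']
  calc ∑ i, Real.log (hA.1.eigenvalues i) ≤ ∑ i, (hA.1.eigenvalues i - 1) :=
        Finset.sum_le_sum fun i _ => Real.log_le_sub_one_of_pos (hA.eigenvalues_pos i)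
    _ = ∑ i, hA.1.eigenvalues i - Fintype.card n := by simp [Finset.sum_sub_distrib]

lemma PosDef.log_det_add_log_det_le {A B : Matrix n n ℝ} (hA : A.PosDef) (hB : B.PosDef) :
    Real.log A.det + Real.log B.det ≤ (A * B).trace - Fintype.card n := by
  obtain ⟨C, hC, rfl⟩ := CStarAlgebra.isStrictlyPositive_iff_eq_star_mul_self.mp
    hB.isStrictlyPositive
  have hCAC : (C * A * star C).PosDef := (IsUnit.posDef_star_right_conjugate_iff hC).mpr hA
  have hdet : (C * A * star C).det = A.det * (star C * C).det := by
    simp only [det_mul]; ring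
  have htr : (C * A * star C).trace = (A * (star C * C)).trace := by
    rw [trace_mul_cycle, trace_mul_comm]
  rw [← Real.log_mul hA.det_pos.ne' hB.det_pos.ne', ← hdet, ← htr]
  exact hCAC.log_det_le_trace_sub_card

end Matrix

def upperPairsEquivSigma (p : ℕ) :
    {q : Fin p × Fin p // q.1 < q.2} ≃ Σ j : Fin p, Fin j where
  toFun q := ⟨q.1.2, ⟨q.1.1, q.2⟩⟩
  invFun x := ⟨(⟨x.2, x.2.isLt.trans x.1.isLt⟩, x.1), x.2.isLt⟩

lemma card_upperPairs (p : ℕ) :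
    Fintype.card {q : Fin p × Fin p // q.1 < q.2} = p * (p - 1) / 2 := by
  rw [Fintype.card_congr (upperPairsEquivSigma p), Fintype.card_sigma]
  simp only [Fintype.card_fin]
  rw [Fin.sum_univ_eq_sum_range (fun i => i) p, Finset.sum_range_id]

section SlopeNorm

variable {p : ℕ}

instance : Nonempty (Fin (p * (p - 1) / 2) ≃ {q : Fin p × Fin p // q.1 < q.2}) :=
  Fintype.card_eq.mp (by rw [Fintype.card_fin, card_upperPairs])

variable (lam : Fin (p * (p - 1) / 2) → ℝ)

lemma sum_le_slopeNormMat (Θ : Matrix (Fin p) (Fin p) ℝ)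
    (f : Fin (p * (p - 1) / 2) ≃ {q : Fin p × Fin p // q.1 < q.2}) :
    ∑ k, lam k * |Θ (f k).1.1 (f k).1.2| ≤ slopeNormMat lam Θ :=
  le_ciSup (f := fun f : Fin (p * (p - 1) / 2) ≃ {q : Fin p × Fin p // q.1 < q.2} =>
    ∑ k, lam k * |Θ (f k).1.1 (f k).1.2|) (Set.finite_range _).bddAbove f

lemma exists_slopeNormMat_eq_sum (Θ : Matrix (Fin p) (Fin p) ℝ) :
    ∃ f : Fin (p * (p - 1) / 2) ≃ {q : Fin p × Fin p // q.1 < q.2},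
      slopeNormMat lam Θ = ∑ k, lam k * |Θ (f k).1.1 (f k).1.2| := by
  obtain ⟨f, hf⟩ := exists_eq_ciSup_of_finite (f := fun f :
    Fin (p * (p - 1) / 2) ≃ {q : Fin p × Fin p // q.1 < q.2} =>
      ∑ k, lam k * |Θ (f k).1.1 (f k).1.2|)
  exact ⟨f, hf.symm⟩

lemma slopeNormMat_diagonal (d : Fin p → ℝ) : slopeNormMat lam (diagonal d) = 0 := by
  have hoff (q : {q : Fin p × Fin p // q.1 < q.2}) : diagonal d q.1.1 q.1.2 = 0 :=
    diagonal_apply_ne d q.2.ne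
  simp [slopeNormMat, hoff]

variable {lam}

lemma slopeNormMat_nonneg (hlam : ∀ k, 0 ≤ lam k) (Θ : Matrix (Fin p) (Fin p) ℝ) :
    0 ≤ slopeNormMat lam Θ :=
  (Finset.sum_nonneg fun k _ => mul_nonneg (hlam k) (abs_nonneg _)).trans
    (sum_le_slopeNormMat lam Θ (Classical.arbitrary _))

lemma slopeNormMat_smul {c : ℝ} (hc : 0 ≤ c) (Θ : Matrix (Fin p) (Fin p) ℝ) :
    slopeNormMat lam (c • Θ) = c * slopeNormMat lam Θ := by
  simp only [slopeNormMat, Real.mul_iSup_of_nonneg hc, Finset.mul_sum, Matrix.smul_apply,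
    smul_eq_mul, abs_mul, abs_of_nonneg hc, mul_left_comm c]

lemma exists_isSymm_subgradient_slopeNormMat (hlam : ∀ k, 0 ≤ lam k)
    {Θ : Matrix (Fin p) (Fin p) ℝ} (hΘ : Θ.IsSymm) :
    ∃ U : Matrix (Fin p) (Fin p) ℝ, U.IsSymm ∧
      (∀ B : Matrix (Fin p) (Fin p) ℝ, B.IsSymm → (U * B).trace ≤ slopeNormMat lam B) ∧
      (U * Θ).trace = slopeNormMat lam Θ := by
  obtain ⟨f, hf⟩ := exists_slopeNormMat_eq_sum lam Θ
  set U₀ : Matrix (Fin p) (Fin p) ℝ :=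
    ∑ k, single (f k).1.1 (f k).1.2 (lam k * SignType.sign (Θ (f k).1.1 (f k).1.2))
  have hU₀ : ∀ B : Matrix (Fin p) (Fin p) ℝ, B.IsSymm → (U₀ * B).trace =
      ∑ k, lam k * (SignType.sign (Θ (f k).1.1 (f k).1.2) * B (f k).1.1 (f k).1.2) := by
    intro B hB
    simp [U₀, Finset.sum_mul, trace_sum, trace_single_mul, hB.apply, mul_assoc]
  have hsymmetrize : ∀ B : Matrix (Fin p) (Fin p) ℝ, B.IsSymm →
      (((1 / 2 : ℝ) • (U₀ + U₀ᵀ)) * B).trace = (U₀ * B).trace := by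
    intro B hB
    rw [smul_mul, add_mul, trace_smul, trace_add, trace_transpose_mul_of_isSymm U₀ hB, smul_eq_mul]
    ring
  refine ⟨(1 / 2 : ℝ) • (U₀ + U₀ᵀ), (isSymm_add_transpose_self U₀).smul _, fun B hB => ?_, ?_⟩
  · rw [hsymmetrize B hB, hU₀ B hB]
    refine le_trans (Finset.sum_le_sum fun k _ => ?_) (sum_le_slopeNormMat lam B f)
    exact mul_le_mul_of_nonneg_left (sign_mul_le_abs _ _) (hlam k)
  · simp only [hsymmetrize Θ hΘ, hU₀ Θ hΘ, sign_mul_self, hf]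

lemma slopeDualNorm_le_one_iff (hlam : ∀ k, 0 ≤ lam k) (U : Matrix (Fin p) (Fin p) ℝ) :
    slopeDualNorm lam U ≤ 1 ↔
      ∀ Θ : Matrix (Fin p) (Fin p) ℝ, Θ.IsSymm → (U * Θ).trace ≤ slopeNormMat lam Θ := by
  simp only [slopeDualNorm, sSup_le_iff, Set.mem_ofPred_eq, forall_exists_index, and_imp]
  constructor
  · intro h Θ hΘ
    refine le_of_forall_pos_le_add fun ε hε => ?_
    have hD : 0 < slopeNormMat lam Θ + ε := by linarith [slopeNormMat_nonneg hlam Θ]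
    have hscaled : (slopeNormMat lam Θ + ε)⁻¹ * (U * Θ).trace ≤ 1 := by
      have := h _ ((slopeNormMat lam Θ + ε)⁻¹ • Θ) (hΘ.smul _)
        (by rw [slopeNormMat_smul (inv_nonneg.mpr hD.le), inv_mul_le_iff₀ hD]; linarith) rfl
      rw [Matrix.mul_smul, trace_smul, smul_eq_mul] at this
      exact_mod_cast this
    linarith [(inv_mul_le_iff₀ hD).mp hscaled]
  · rintro h _ Θ hΘ hΘ₁ rfl
    exact_mod_cast (h Θ hΘ).trans hΘ₁

end SlopeNorm

section DualProblem

variable {p : ℕ} {lam : Fin (p * (p - 1) / 2) → ℝ}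

variable (lam) in
def gslopeDualSet (S : Matrix (Fin p) (Fin p) ℝ) : Set (Matrix (Fin p) (Fin p) ℝ) :=
  {W | W.PosSemidef ∧
    ∀ Θ : Matrix (Fin p) (Fin p) ℝ, Θ.IsSymm → ((W - S) * Θ).trace ≤ slopeNormMat lam Θ}

variable {S W : Matrix (Fin p) (Fin p) ℝ}

lemma self_mem_gslopeDualSet (hlam : ∀ k, 0 ≤ lam k) (hS : S.PosSemidef) :
    S ∈ gslopeDualSet lam S :=
  ⟨hS, fun Θ _ => by simpa using slopeNormMat_nonneg hlam Θ⟩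

lemma diag_eq_of_mem_gslopeDualSet (hW : W ∈ gslopeDualSet lam S) (i : Fin p) :
    W i i = S i i := by
  have htest (c : ℝ) : (W i i - S i i) * c ≤ 0 := by
    simpa [trace, mul_diagonal, Pi.single_apply, slopeNormMat_diagonal] using
      hW.2 (diagonal (Pi.single i c)) (isSymm_diagonal _)
  linarith [htest 1, htest (-1)]

lemma isClosed_gslopeDualSet : IsClosed (gslopeDualSet lam S) := by
  simp only [gslopeDualSet, Set.ofPred_and, Set.ofPred_forall]
  exact isClosed_setOf_posSemidef.inter <| isClosed_iInter fun Θ => isClosed_iInter fun _ =>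
    isClosed_le (by fun_prop) continuous_const

lemma isCompact_gslopeDualSet : IsCompact (gslopeDualSet lam S) := by
  refine (isCompact_univ_pi fun i => isCompact_univ_pi fun j =>
    isCompact_Icc (a := -((S i i + S j j) / 2)) (b := (S i i + S j j) / 2)).of_isClosed_subset
    isClosed_gslopeDualSet fun W hW i _ j _ => ?_
  have := hW.1.two_mul_abs_apply_le i j
  rw [diag_eq_of_mem_gslopeDualSet hW, diag_eq_of_mem_gslopeDualSet hW] at this
  exact abs_le.mp (by linarith)

lemma exists_posDef_isMaxOn_det (hlam : ∀ k, 0 ≤ lam k) (hS : S.PosDef) :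
    ∃ W ∈ gslopeDualSet lam S, W.PosDef ∧ IsMaxOn det (gslopeDualSet lam S) W := by
  obtain ⟨W, hW, hmax⟩ := isCompact_gslopeDualSet.exists_isMaxOn
    ⟨S, self_mem_gslopeDualSet hlam hS.posSemidef⟩ (continuous_id.matrix_det).continuousOn
  have hdet : 0 < W.det := hS.det_pos.trans_le (hmax (self_mem_gslopeDualSet hlam hS.posSemidef))
  exact ⟨W, hW, hW.1.posDef_iff_det_ne_zero.mpr hdet.ne', hmax⟩

lemma add_smul_mem_gslopeDualSet {U : Matrix (Fin p) (Fin p) ℝ} {t : ℝ}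
    (hW : W ∈ gslopeDualSet lam S)
    (hU : ∀ Θ : Matrix (Fin p) (Fin p) ℝ, Θ.IsSymm → (U * Θ).trace ≤ slopeNormMat lam Θ)
    (ht : t ∈ Set.Icc (0 : ℝ) 1) (hpsd : (W + t • (S + U - W)).PosSemidef) :
    W + t • (S + U - W) ∈ gslopeDualSet lam S := by
  refine ⟨hpsd, fun Θ hΘ => ?_⟩
  have hdecomp : W + t • (S + U - W) - S = (1 - t) • (W - S) + t • U := by module
  rw [hdecomp, add_mul, trace_add, smul_mul, smul_mul, trace_smul, trace_smul, smul_eq_mul,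
    smul_eq_mul]
  calc (1 - t) * ((W - S) * Θ).trace + t * (U * Θ).trace
      ≤ (1 - t) * slopeNormMat lam Θ + t * slopeNormMat lam Θ :=
        add_le_add (mul_le_mul_of_nonneg_left (hW.2 Θ hΘ) (by linarith [ht.2]))
          (mul_le_mul_of_nonneg_left (hU Θ hΘ) ht.1)
    _ = slopeNormMat lam Θ := by ring

lemma trace_sub_mul_inv_eq_slopeNormMat (hlam : ∀ k, 0 ≤ lam k) (hS : S.IsSymm)
    (hW : W ∈ gslopeDualSet lam S) (hWpd : W.PosDef) (hmax : IsMaxOn det (gslopeDualSet lam S) W) :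
    ((W - S) * W⁻¹).trace = slopeNormMat lam W⁻¹ := by
  have hWsymm : W.IsSymm := hWpd.isSymm
  refine le_antisymm (hW.2 _ hWsymm.inv) (not_lt.mp fun hlt => ?_)
  obtain ⟨U, hUsymm, hUle, hUeq⟩ := exists_isSymm_subgradient_slopeNormMat hlam hWsymm.inv
  set M := S + U - W
  have hM : M.IsHermitian := isHermitian_iff_isSymm.mpr ((hS.add hUsymm).sub hWsymm)
  have hslope : 0 < W.det * (W⁻¹ * M).trace := by
    have htrace : (W⁻¹ * M).trace = (U * W⁻¹).trace - ((W - S) * W⁻¹).trace := by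
      rw [trace_mul_comm, show M = U - (W - S) by simp only [M]; abel, sub_mul, trace_sub]
    exact mul_pos hWpd.det_pos (by linarith)
  have hbetter : ∀ᶠ t in 𝓝[>] (0 : ℝ),
      W.det < (W + t • M).det ∧ (W + t • M).PosDef ∧ t ∈ Set.Ioo 0 1 := by
    filter_upwards [(hasDerivAt_det_add_smul hWpd.det_pos.ne'.isUnit M).eventually_nhdsGT_lt hslope,
      nhdsWithin_le_nhds (hWpd.eventually_posDef_add_smul hM), Ioo_mem_nhdsGT one_pos]
      with t hdet hpd ht
    exact ⟨by simpa using hdet, hpd, ht⟩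
  obtain ⟨t, hdet, hpd, ht⟩ := hbetter.exists
  exact (hmax (add_smul_mem_gslopeDualSet hW hUle ⟨ht.1.le, ht.2.le⟩ hpd.posSemidef)).not_gt hdet

lemma log_det_sub_trace_sub_slopeNormMat_le (hW : W ∈ gslopeDualSet lam S) (hWpd : W.PosDef)
    {Θ : Matrix (Fin p) (Fin p) ℝ} (hΘ : Θ.PosDef) :
    Real.log Θ.det - (Θ * S).trace - slopeNormMat lam Θ ≤ -(p : ℝ) - Real.log W.det := by
  have hlog := hΘ.log_det_add_log_det_le hWpd
  rw [Fintype.card_fin] at hlog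
  have hfeas := hW.2 Θ hΘ.isSymm
  rw [sub_mul, trace_sub, trace_mul_comm W, trace_mul_comm S] at hfeas
  linarith

lemma isGreatest_gslope_primal (hlam : ∀ k, 0 ≤ lam k) (hS : S.IsSymm)
    (hW : W ∈ gslopeDualSet lam S) (hWpd : W.PosDef) (hmax : IsMaxOn det (gslopeDualSet lam S) W) :
    IsGreatest {v : ℝ | ∃ Θ : Matrix (Fin p) (Fin p) ℝ, Θ.IsSymm ∧ Θ.PosDef ∧
        v = Real.log Θ.det - (Θ * S).trace - slopeNormMat lam Θ} (-(p : ℝ) - Real.log W.det) := by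
  refine ⟨⟨W⁻¹, hWpd.isSymm.inv, hWpd.inv, ?_⟩, ?_⟩
  · rw [← trace_sub_mul_inv_eq_slopeNormMat hlam hS hW hWpd hmax, sub_mul, trace_sub,
      mul_nonsing_inv _ hWpd.det_pos.ne'.isUnit, trace_one, Fintype.card_fin, trace_mul_comm S,
      det_nonsing_inv, Ring.inverse_eq_inv', Real.log_inv]
    ring
  · rintro _ ⟨Θ, -, hΘ, rfl⟩
    exact log_det_sub_trace_sub_slopeNormMat_le hW hWpd hΘ

lemma isGreatest_gslope_dual (hlam : ∀ k, 0 ≤ lam k) (hW : W ∈ gslopeDualSet lam S)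
    (hWpd : W.PosDef) (hmax : IsMaxOn det (gslopeDualSet lam S) W) :
    IsGreatest {v : ℝ | ∃ W' : Matrix (Fin p) (Fin p) ℝ, W'.IsSymm ∧ W'.PosDef ∧
        slopeDualNorm lam (W' - S) ≤ 1 ∧ v = Real.log W'.det} (Real.log W.det) := by
  refine ⟨⟨W, hWpd.isSymm, hWpd, (slopeDualNorm_le_one_iff hlam _).mpr hW.2, rfl⟩, ?_⟩
  rintro _ ⟨W', -, hW'pd, hW'dual, rfl⟩
  exact Real.log_le_log hW'pd.det_pos
    (hmax ⟨hW'pd.posSemidef, (slopeDualNorm_le_one_iff hlam _).mp hW'dual⟩)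

end DualProblem

theorem gslope_duality_general {p : ℕ}
    (S : Matrix (Fin p) (Fin p) ℝ) (hSpd : S.PosDef)
    (lam : Fin (p * (p - 1) / 2) → ℝ) (hpos : ∀ k, 0 < lam k) :
    sSup {v : ℝ | ∃ Θ : Matrix (Fin p) (Fin p) ℝ, Θ.IsSymm ∧ Θ.PosDef ∧
        v = Real.log Θ.det - (Θ * S).trace - slopeNormMat lam Θ}
      = -(p : ℝ) - sSup {v : ℝ | ∃ W : Matrix (Fin p) (Fin p) ℝ, W.IsSymm ∧ W.PosDef ∧
          slopeDualNorm lam (W - S) ≤ 1 ∧ v = Real.log W.det} := by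
  have hlam : ∀ k, 0 ≤ lam k := fun k => (hpos k).le
  obtain ⟨W, hW, hWpd, hmax⟩ := exists_posDef_isMaxOn_det hlam hSpd
  rw [(isGreatest_gslope_primal hlam hSpd.isSymm hW hWpd hmax).csSup_eq,
    (isGreatest_gslope_dual hlam hW hWpd hmax).csSup_eq]

/-- for symmetric positive definite `S` and `λ_1 ≥ ⋯ ≥ λ_m > 0` with
`m = p(p−1)/2`, the Gslope primal optimal value and the dual optimal value satisfy
`sup { logdet Θ − tr(Θ S) − J_λ(Θ) : Θ symm. pos. def. }
  = −p − sup { logdet W : W symm. pos. def., J^D_λ(W − S) ≤ 1 }`. -/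
theorem gslope_duality {p : ℕ}
    (S : Matrix (Fin p) (Fin p) ℝ) (hSsymm : S.IsSymm) (hSpd : S.PosDef)
    (lam : Fin (p * (p - 1) / 2) → ℝ) (hmono : Antitone lam) (hpos : ∀ k, 0 < lam k) :
    sSup {v : ℝ | ∃ Θ : Matrix (Fin p) (Fin p) ℝ, Θ.IsSymm ∧ Θ.PosDef ∧
        v = Real.log Θ.det - (Θ * S).trace - slopeNormMat lam Θ}
      = -(p : ℝ) - sSup {v : ℝ | ∃ W : Matrix (Fin p) (Fin p) ℝ, W.IsSymm ∧ W.PosDef ∧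
          slopeDualNorm lam (W - S) ≤ 1 ∧ v = Real.log W.det} :=
  gslope_duality_general S hSpd lam hpos
end

section
/- Let m ≥ 1 and let λ ∈ ℝ^m satisfy λ_1 ≥ ⋯ ≥ λ_m > 0. Then for every w ∈ ℝ^m, sup{ Σ_{i=1}^m u_i w_i : u ∈ ℝ^m, J_λ(u) ≤ 1 } = max_{1 ≤ k ≤ m} ( Σ_{i=1}^k |w|_(i) ) / ( Σ_{i=1}^k λ_i ), where |w|_(1) ≥ ⋯ ≥ |w|_(m) are the absolute values of the entries of w sorted in decreasing order; that is, the dual norm of the sorted-ℓ1 norm is the maximum over k of the sum of the k largest absolute entries divided by the sum of the k largest weights. -/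
/-!
For `u` with `J_λ(u) ≤ 1`, bound `Σ uᵢwᵢ ≤ Σ |u|_(i) |w|_(i)` by the rearrangement inequality;
with `M` the claimed maximum, the prefix sums of `|w|_(·)` are dominated by those of `M λ`, so
Abel summation against the nonincreasing nonnegative sequence `|u|_(·)` gives
`Σ |u|_(i) |w|_(i) ≤ M Σ λᵢ |u|_(i) = M J_λ(u) ≤ M`. Conversely, for each `k` the vector
carrying `sign(w) / (λ₁ + ⋯ + λ_k)` on the positions of the `k` largest `|wᵢ|` has
`J_λ = 1` and pairs with `w` to the `k`-th ratio.
-/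

/-- The sorted-ℓ1 (SLOPE) norm `J_λ(x) = Σ_i λ_i |x|_(i)`: for `λ` nonincreasing and
nonnegative this equals (by the rearrangement inequality) the maximum over permutations
`σ` of `Σ_i λ_i |x_(σ i)|`. -/
noncomputable def slopeNorm {m : ℕ} (lam : Fin m → ℝ) (x : Fin m → ℝ) : ℝ :=
  ⨆ σ : Equiv.Perm (Fin m), ∑ i, lam i * |x (σ i)|

open Finset

theorem Fin.exists_perm_antitone_comp {m : ℕ} {α : Type*} [LinearOrder α] (f : Fin m → α) :
    ∃ τ : Equiv.Perm (Fin m), Antitone (f ∘ τ) :=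
  ⟨Tuple.sort (OrderDual.toDual ∘ f),
    monotone_toDual_comp_iff.mp (Tuple.monotone_sort (OrderDual.toDual ∘ f))⟩

/-- The induction invariant of Abel summation. -/
theorem Fin.mul_sum_le_sum_mul_of_sum_Iic_nonneg {n : ℕ} {a d : Fin (n + 1) → ℝ}
    (ha : Antitone a) (hd : ∀ k, 0 ≤ ∑ i ∈ Iic k, d i) :
    a (Fin.last n) * ∑ i, d i ≤ ∑ i, a i * d i := by
  induction n with
  | zero => simp
  | succ n ih =>
    have hd' : ∀ k : Fin (n + 1), 0 ≤ ∑ i ∈ Iic k, d i.castSucc := fun k => by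
      simpa [Fin.sum_Iic_castSucc] using hd k.castSucc
    have hprefix : 0 ≤ ∑ i : Fin (n + 1), d i.castSucc := by
      simpa [← Fin.top_eq_last, Iic_top] using hd' (Fin.last n)
    have hlast : a (Fin.last (n + 1)) ≤ a (Fin.last n).castSucc :=
      ha (Fin.castSucc_lt_last _).le
    have ih' := ih (ha.comp_monotone Fin.strictMono_castSucc.monotone) hd'
    simp only [Function.comp_apply] at ih'
    rw [Fin.sum_univ_castSucc, Fin.sum_univ_castSucc (fun i => a i * d i)]
    nlinarith

theorem Fin.sum_mul_le_sum_mul_of_sum_Iic_le {m : ℕ} {a b c : Fin m → ℝ} (ha : Antitone a)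
    (ha0 : ∀ i, 0 ≤ a i) (hbc : ∀ k, ∑ i ∈ Iic k, b i ≤ ∑ i ∈ Iic k, c i) :
    ∑ i, a i * b i ≤ ∑ i, a i * c i := by
  cases m with
  | zero => simp
  | succ n =>
    have hd : ∀ k, 0 ≤ ∑ i ∈ Iic k, (c i - b i) := fun k => by
      simpa [sum_sub_distrib] using hbc k
    have habel := Fin.mul_sum_le_sum_mul_of_sum_Iic_nonneg ha hd
    have hsum : 0 ≤ ∑ i, (c i - b i) := by
      simpa [← Fin.top_eq_last, Iic_top] using hd (Fin.last n)
    have hdiff : 0 ≤ ∑ i, a i * (c i - b i) :=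
      (mul_nonneg (ha0 _) hsum).trans habel
    simpa [mul_sub, sum_sub_distrib] using hdiff

section SlopeNorm

variable {m : ℕ} {lam : Fin m → ℝ}

theorem slopeNorm_eq_sum_of_antitone (hlam : Antitone lam) {x : Fin m → ℝ}
    (τ : Equiv.Perm (Fin m)) (hτ : Antitone fun i => |x (τ i)|) :
    slopeNorm lam x = ∑ i, lam i * |x (τ i)| := by
  refine le_antisymm (ciSup_le fun ρ => ?_)
    (le_ciSup (f := fun ρ : Equiv.Perm (Fin m) => ∑ i, lam i * |x (ρ i)|)
      (Finite.bddAbove_range _) τ)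
  simpa using (hlam.monovary hτ).sum_mul_comp_perm_le_sum_mul (σ := τ.symm * ρ)

theorem sum_mul_le_mul_slopeNorm (hlam : Antitone lam) {w : Fin m → ℝ} {σ : Equiv.Perm (Fin m)}
    (hσ : Antitone fun i => |w (σ i)|) {M : ℝ}
    (hM : ∀ k, ∑ i ∈ Iic k, |w (σ i)| ≤ M * ∑ i ∈ Iic k, lam i) (u : Fin m → ℝ) :
    ∑ i, u i * w i ≤ M * slopeNorm lam u := by
  obtain ⟨τ, hτ⟩ := Fin.exists_perm_antitone_comp fun i => |u (σ i)|
  calc ∑ i, u i * w i ≤ ∑ i, |u i| * |w i| :=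
        sum_le_sum fun i _ => (le_abs_self _).trans (abs_mul _ _).le
    _ = ∑ i, |u (σ i)| * |w (σ i)| := (Equiv.sum_comp σ _).symm
    _ ≤ ∑ i, |u (σ (τ i))| * |w (σ i)| := by
        simpa using (hτ.monovary hσ).sum_comp_perm_mul_le_sum_mul (σ := τ.symm)
    _ ≤ ∑ i, |u (σ (τ i))| * (M * lam i) :=
        Fin.sum_mul_le_sum_mul_of_sum_Iic_le hτ (fun _ => abs_nonneg _) (by simpa [← mul_sum])
    _ = M * slopeNorm lam u := by
        rw [slopeNorm_eq_sum_of_antitone hlam (σ * τ) hτ, mul_sum]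
        exact sum_congr rfl fun i _ => by simp only [Equiv.Perm.mul_apply]; ring

theorem exists_slopeNorm_eq_one_and_sum_mul_eq (hlam : Antitone lam) (w : Fin m → ℝ)
    (σ : Equiv.Perm (Fin m)) (k : Fin m) (hk : 0 < ∑ i ∈ Iic k, lam i) :
    ∃ u : Fin m → ℝ, slopeNorm lam u = 1 ∧
      ∑ i, u i * w i = (∑ i ∈ Iic k, |w (σ i)|) / ∑ i ∈ Iic k, lam i := by
  set L := ∑ i ∈ Iic k, lam i
  -- Unlike `Real.sign`, `sgn 0 = 1`, so that `|u ∘ σ|` is exactly the step vector `L⁻¹ 𝟙_{≤ k}`.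
  let sgn : ℝ → ℝ := fun t => if 0 ≤ t then 1 else -1
  have hsgn_abs (t : ℝ) : |sgn t| = 1 := by simp only [sgn]; split_ifs <;> simp
  have hsgn_mul (t : ℝ) : sgn t * t = |t| := by
    simp only [sgn]; split_ifs with h
    · simp [abs_of_nonneg h]
    · simp [abs_of_neg (not_le.mp h)]
  let u : Fin m → ℝ := fun j => if σ.symm j ≤ k then sgn (w j) / L else 0
  have hu_abs (i : Fin m) : |u (σ i)| = if i ≤ k then L⁻¹ else 0 := by
    simp only [u, Equiv.symm_apply_apply]
    split_ifs <;> simp [abs_div, hsgn_abs, abs_of_pos hk]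
  have hu_anti : Antitone fun i => |u (σ i)| := by
    intro i j hij
    simp only [hu_abs]
    split_ifs with hj hi hi <;> first | exact le_rfl | exact absurd (hij.trans hj) hi | positivity
  refine ⟨u, ?_, ?_⟩
  · rw [slopeNorm_eq_sum_of_antitone hlam σ hu_anti]
    simp only [hu_abs, mul_ite, mul_zero, ← sum_filter, filter_ge_eq_Iic, ← sum_mul]
    exact mul_inv_cancel₀ hk.ne'
  · rw [← Equiv.sum_comp σ, sum_div, ← filter_ge_eq_Iic (a := k), sum_filter]
    refine sum_congr rfl fun i _ => ?_
    simp only [u, Equiv.symm_apply_apply]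
    split_ifs <;> simp [div_mul_eq_mul_div, hsgn_mul]

end SlopeNorm

/-- for `λ_1 ≥ ⋯ ≥ λ_m > 0` and any `w`, the dual norm of the sorted-ℓ1
norm evaluated at `w`, i.e. `sup { Σ_i u_i w_i : J_λ(u) ≤ 1 }`, equals
`max_{1 ≤ k ≤ m} (Σ_{i=1}^k |w|_(i)) / (Σ_{i=1}^k λ_i)`, where `|w|_(1) ≥ ⋯ ≥ |w|_(m)`
are the absolute values of the entries of `w` sorted in decreasing order. -/
theorem slope_dual_norm_formula {m : ℕ} (hm : 0 < m) (lam : Fin m → ℝ)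
    (hmono : Antitone lam) (hpos : ∀ i, 0 < lam i) (w : Fin m → ℝ)
    (σ : Equiv.Perm (Fin m)) (hσ : Antitone (fun i => |w (σ i)|)) :
    sSup {s : ℝ | ∃ u : Fin m → ℝ, slopeNorm lam u ≤ 1 ∧ s = ∑ i, u i * w i}
      = Finset.univ.sup' (Finset.univ_nonempty_iff.mpr ⟨⟨0, hm⟩⟩)
          (fun k : Fin m =>
            (∑ i ∈ Finset.univ.filter (fun i : Fin m => i ≤ k), |w (σ i)|) /
            (∑ i ∈ Finset.univ.filter (fun i : Fin m => i ≤ k), lam i)) := by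
  simp only [filter_ge_eq_Iic]
  set M := univ.sup' _ fun k : Fin m => (∑ i ∈ Iic k, |w (σ i)|) / ∑ i ∈ Iic k, lam i
  have hL (k : Fin m) : 0 < ∑ i ∈ Iic k, lam i := sum_pos (fun i _ => hpos i) nonempty_Iic
  have hratio_le (k : Fin m) : (∑ i ∈ Iic k, |w (σ i)|) / ∑ i ∈ Iic k, lam i ≤ M :=
    le_sup' (fun k : Fin m => (∑ i ∈ Iic k, |w (σ i)|) / ∑ i ∈ Iic k, lam i) (mem_univ k)
  have hM : 0 ≤ M := (div_nonneg (sum_nonneg fun _ _ => abs_nonneg _) (hL ⟨0, hm⟩).le).trans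
    (hratio_le ⟨0, hm⟩)
  set S := {s : ℝ | ∃ u : Fin m → ℝ, slopeNorm lam u ≤ 1 ∧ s = ∑ i, u i * w i}
  have hmem (k : Fin m) : (∑ i ∈ Iic k, |w (σ i)|) / ∑ i ∈ Iic k, lam i ∈ S :=
    have ⟨u, hu, hval⟩ := exists_slopeNorm_eq_one_and_sum_mul_eq hmono w σ k (hL k)
    ⟨u, hu.le, hval.symm⟩
  have hbound : ∀ s ∈ S, s ≤ M := by
    rintro _ ⟨u, hu, rfl⟩
    calc ∑ i, u i * w i ≤ M * slopeNorm lam u := sum_mul_le_mul_slopeNorm hmono hσ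
          (fun k => (div_le_iff₀ (hL k)).mp (hratio_le k)) u
      _ ≤ M := mul_le_of_le_one_right hM hu
  exact le_antisymm (csSup_le ⟨_, hmem ⟨0, hm⟩⟩ hbound)
    (sup'_le _ _ fun k _ => le_csSup ⟨M, hbound⟩ (hmem k))
end

section
/- Let m ≥ 1 and let λ ∈ ℝ^m satisfy λ_1 ≥ ⋯ ≥ λ_m ≥ 0. Then the sorted-ℓ1 penalty x ↦ J_λ(x) = Σ_{i=1}^m λ_i |x|_(i) is a convex function on ℝ^m. -/
/-- for `λ_1 ≥ ⋯ ≥ λ_m ≥ 0`, the sorted-ℓ1 penalty `J_λ` is convex on `ℝ^m`. -/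
theorem slopeNorm_convexOn {m : ℕ} (hm : 1 ≤ m) (lam : Fin m → ℝ)
    (hmono : Antitone lam) (hnonneg : ∀ i, 0 ≤ lam i) :
    ConvexOn ℝ Set.univ (fun x : Fin m → ℝ => slopeNorm lam x) := by
  refine ⟨convex_univ, ?_⟩
  intro x _ y _ a b ha hb hab
  simp only [slopeNorm]
  have hbdd : ∀ z : Fin m → ℝ,
      BddAbove (Set.range fun σ : Equiv.Perm (Fin m) => ∑ i, lam i * |z (σ i)|) :=
    fun z => (Set.finite_range _).bddAbove
  refine ciSup_le fun σ => ?_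
  have hstep : ∑ i, lam i * |(a • x + b • y) (σ i)| ≤
      a * (∑ i, lam i * |x (σ i)|) + b * (∑ i, lam i * |y (σ i)|) := by
    rw [Finset.mul_sum, Finset.mul_sum, ← Finset.sum_add_distrib]
    refine Finset.sum_le_sum fun i _ => ?_
    have h1 : |(a • x + b • y) (σ i)| ≤ a * |x (σ i)| + b * |y (σ i)| := by
      simp only [Pi.add_apply, Pi.smul_apply, smul_eq_mul]
      calc |a * x (σ i) + b * y (σ i)| ≤ |a * x (σ i)| + |b * y (σ i)| := abs_add_le _ _
        _ = a * |x (σ i)| + b * |y (σ i)| := by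
          rw [abs_mul, abs_mul, abs_of_nonneg ha, abs_of_nonneg hb]
    nlinarith [hnonneg i]
  refine hstep.trans (add_le_add ?_ ?_)
  · exact mul_le_mul_of_nonneg_left (le_ciSup (hbdd x) σ) ha
  · exact mul_le_mul_of_nonneg_left (le_ciSup (hbdd y) σ) hb
end

section
/- Let A be a symmetric p×p real matrix and ρ > 0. Then there exists a unique symmetric positive definite p×p matrix Θ satisfying ρΘ − Θ⁻¹ = ρA. Moreover, if A = Q H Qᵀ with Q orthogonal and H = diag(h_1,…,h_p), then Θ = Q D Qᵀ with D = diag(d_1,…,d_p) and d_i = (h_i + √(h_i² + 4/ρ))/2. -/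
/-!
On eigenvalues, `Θ ↦ ρΘ - Θ⁻¹` acts as the scalar map `x ↦ ρx - x⁻¹`, a bijection from `(0, ∞)`
onto `ℝ` whose inverse is `d(h) = (h + √(h² + 4/ρ))/2`. Hence `Q diag(d(hᵢ)) Qᵀ` is a positive
definite solution. Conversely, a positive definite solution `Θ` satisfies `A = f(Θ)` in the
continuous functional calculus, with `f x = x - ρ⁻¹x⁻¹`; since `d ∘ f = id` on the spectrum of `Θ`,
`Θ = d(A)` is determined by `A`.
-/

open Matrix

/-- The proximal map of `-log` with step `1/ρ`: the positive root `d` of `ρ d - d⁻¹ = ρ h`. -/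
noncomputable def negLogProx (ρ h : ℝ) : ℝ := (h + √(h ^ 2 + 4 / ρ)) / 2

section negLogProx

variable {ρ : ℝ} (hρ : 0 < ρ)
include hρ

lemma negLogProx_pos (h : ℝ) : 0 < negLogProx ρ h := by
  have : |h| < √(h ^ 2 + 4 / ρ) := by
    rw [← Real.sqrt_sq_eq_abs]
    exact Real.sqrt_lt_sqrt (sq_nonneg h) (by linarith [div_pos four_pos hρ])
  rw [negLogProx]
  linarith [neg_abs_le h]

lemma mul_negLogProx_sub_inv (h : ℝ) :
    ρ * negLogProx ρ h - (negLogProx ρ h)⁻¹ = ρ * h := by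
  have hd := (negLogProx_pos hρ h).ne'
  have hs : ρ * √(h ^ 2 + 4 / ρ) ^ 2 = ρ * h ^ 2 + 4 := by
    rw [Real.sq_sqrt (by positivity)]
    field_simp
  rw [negLogProx] at hd ⊢
  generalize √(h ^ 2 + 4 / ρ) = s at hs hd ⊢
  have : h + s ≠ 0 := by contrapose! hd; simp [hd]
  field_simp
  linear_combination hs

lemma negLogProx_sub_inv {x : ℝ} (hx : 0 < x) : negLogProx ρ (x - ρ⁻¹ * x⁻¹) = x := by
  have hs : √((x - ρ⁻¹ * x⁻¹) ^ 2 + 4 / ρ) = x + ρ⁻¹ * x⁻¹ := by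
    rw [Real.sqrt_eq_iff_mul_self_eq_of_pos (by positivity)]
    field_simp
    ring
  rw [negLogProx, hs]
  ring

end negLogProx

section Matrices

variable {n : Type*} [Fintype n] [DecidableEq n]

lemma Matrix.IsSymm.exists_orthogonal_diagonalization {A : Matrix n n ℝ} (hA : A.IsSymm) :
    ∃ (Q : Matrix n n ℝ) (h : n → ℝ), Qᵀ * Q = 1 ∧ A = Q * diagonal h * Qᵀ := by
  have hA' : A.IsHermitian := hA
  refine ⟨hA'.eigenvectorUnitary, hA'.eigenvalues, ?_, ?_⟩
  · simpa [star_eq_conjTranspose] using Unitary.coe_star_mul_self hA'.eigenvectorUnitary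
  · simpa [star_eq_conjTranspose, Function.comp_def] using hA'.spectral_theorem

open scoped MatrixOrder in
lemma Matrix.PosDef.eq_cfc_negLogProx {ρ : ℝ} (hρ : 0 < ρ) {A Θ : Matrix n n ℝ}
    (hΘ : Θ.PosDef) (h : ρ • Θ - Θ⁻¹ = ρ • A) : Θ = cfc (negLogProx ρ) A := by
  have hfin := Θ.finite_spectrum
  have hA : A = cfc (fun x => x - ρ⁻¹ * x⁻¹) Θ := by
    rw [cfc_sub _ _ Θ (hfin.continuousOn _) (hfin.continuousOn _), cfc_id' ℝ Θ,
      cfc_const_mul _ _ Θ (hfin.continuousOn _), cfc_ringInverse_id _ hΘ.isUnit,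
      ← nonsing_inv_eq_ringInverse, ← smul_right_injective _ hρ.ne' |>.eq_iff, ← h]
    simp [smul_sub, smul_smul, hρ.ne']
  rw [hA, ← cfc_comp' _ _ _ ((hfin.image _).continuousOn _) (hfin.continuousOn _)]
  conv_lhs => rw [← cfc_id' ℝ Θ]
  exact cfc_congr fun x hx =>
    (negLogProx_sub_inv hρ (hΘ.isStrictlyPositive.spectrum_pos hx)).symm

section OrthogonalConj

variable {Q : Matrix n n ℝ} (hQ : Qᵀ * Q = 1)
include hQ

lemma posDef_mul_diagonal_mul_transpose {d : n → ℝ} (hd : ∀ i, 0 < d i) :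
    (Q * diagonal d * Qᵀ).PosDef := by
  have hQ' : Q * Qᵀ = 1 := mul_eq_one_comm.mp hQ
  simpa [conjTranspose_eq_transpose_of_trivial] using
    (PosDef.diagonal hd).mul_mul_conjTranspose_same (B := Q) fun v w hvw => by
      simpa [vecMul_vecMul, hQ'] using congr_arg (· ᵥ* Qᵀ) hvw

lemma inv_mul_diagonal_mul_transpose {d : n → ℝ} (hd : ∀ i, d i ≠ 0) :
    (Q * diagonal d * Qᵀ)⁻¹ = Q * diagonal d⁻¹ * Qᵀ := by
  refine inv_eq_left_inv ?_
  calc Q * diagonal d⁻¹ * Qᵀ * (Q * diagonal d * Qᵀ)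
      = Q * (diagonal d⁻¹ * (Qᵀ * Q) * diagonal d) * Qᵀ := by simp only [Matrix.mul_assoc]
    _ = 1 := by simp [hQ, mul_eq_one_comm.mp hQ, diagonal_mul_diagonal, hd]

lemma smul_sub_inv_mul_diagonal_negLogProx_mul_transpose {ρ : ℝ} (hρ : 0 < ρ) (h : n → ℝ) :
    ρ • (Q * diagonal (fun i => negLogProx ρ (h i)) * Qᵀ)
        - (Q * diagonal (fun i => negLogProx ρ (h i)) * Qᵀ)⁻¹ = ρ • (Q * diagonal h * Qᵀ) := by
  have hdiag : ρ • diagonal (fun i => negLogProx ρ (h i)) - diagonal (fun i => negLogProx ρ (h i))⁻¹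
      = ρ • diagonal h := by
    rw [← diagonal_smul, ← diagonal_smul, diagonal_sub]
    exact congr_arg diagonal (funext fun i => mul_negLogProx_sub_inv hρ (h i))
  rw [inv_mul_diagonal_mul_transpose hQ fun i => (negLogProx_pos hρ _).ne']
  calc _ = Q * (ρ • diagonal (fun i => negLogProx ρ (h i))
              - diagonal (fun i => negLogProx ρ (h i))⁻¹) * Qᵀ := by
        simp only [Matrix.mul_sub, Matrix.sub_mul, Matrix.mul_smul, Matrix.smul_mul]
    _ = ρ • (Q * diagonal h * Qᵀ) := by
        rw [hdiag, Matrix.mul_smul, Matrix.smul_mul]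

lemma cfc_negLogProx_mul_diagonal_mul_transpose {ρ : ℝ} (hρ : 0 < ρ) (h : n → ℝ) :
    cfc (negLogProx ρ) (Q * diagonal h * Qᵀ) =
      Q * diagonal (fun i => negLogProx ρ (h i)) * Qᵀ :=
  ((posDef_mul_diagonal_mul_transpose hQ fun i => negLogProx_pos hρ (h i)).eq_cfc_negLogProx hρ
    (smul_sub_inv_mul_diagonal_negLogProx_mul_transpose hQ hρ h)).symm

end OrthogonalConj

end Matrices

/-- for symmetric `A` and `ρ > 0` there is a unique symmetric positive
definite `Θ` with `ρΘ − Θ⁻¹ = ρA`; moreover if `A = Q H Qᵀ` with `Q` orthogonal and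
`H = diag(h)`, then `Θ = Q D Qᵀ` with `D = diag(d)`, `d_i = (h_i + √(h_i² + 4/ρ))/2`. -/
theorem admm_theta_update_exists_unique {p : ℕ}
    (A : Matrix (Fin p) (Fin p) ℝ) (hA : A.IsSymm) (ρ : ℝ) (hρ : 0 < ρ) :
    (∃! Θ : Matrix (Fin p) (Fin p) ℝ,
        Θ.IsSymm ∧ Θ.PosDef ∧ ρ • Θ - Θ⁻¹ = ρ • A) ∧
    ∀ (Q : Matrix (Fin p) (Fin p) ℝ) (h : Fin p → ℝ),
      Qᵀ * Q = 1 → A = Q * Matrix.diagonal h * Qᵀ →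
      ∀ Θ : Matrix (Fin p) (Fin p) ℝ,
        Θ.IsSymm → Θ.PosDef → ρ • Θ - Θ⁻¹ = ρ • A →
        Θ = Q * Matrix.diagonal
              (fun i => (h i + Real.sqrt ((h i) ^ 2 + 4 / ρ)) / 2) * Qᵀ := by
  obtain ⟨Q, h, hQ, hAQ⟩ := hA.exists_orthogonal_diagonalization
  have hpos := posDef_mul_diagonal_mul_transpose hQ fun i => negLogProx_pos hρ (h i)
  have heq : _ = ρ • A := hAQ ▸ smul_sub_inv_mul_diagonal_negLogProx_mul_transpose hQ hρ h
  refine ⟨⟨_, ⟨hpos.isHermitian, hpos, heq⟩, fun Θ ⟨_, hΘ, hΘA⟩ =>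
    (hΘ.eq_cfc_negLogProx hρ hΘA).trans (hpos.eq_cfc_negLogProx hρ heq).symm⟩, ?_⟩
  intro Q' h' hQ' hAQ' Θ _ hΘ hΘA
  rw [hΘ.eq_cfc_negLogProx hρ hΘA, hAQ', cfc_negLogProx_mul_diagonal_mul_transpose hQ' hρ h']
  rfl
end

section
/- Let A be a symmetric p×p real matrix and ρ > 0. Then the function Θ ↦ −logdet Θ + (ρ/2)‖Θ − A‖_F², restricted to symmetric positive definite p×p matrices, has a unique minimizer, and this minimizer is the unique symmetric positive definite Θ satisfying ρΘ − Θ⁻¹ = ρA. -/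
/-!
The objective `f Θ = -log det Θ + (ρ/2)‖Θ - A‖_F²` is strongly convex. Applying `log x ≤ x - 1`
to the eigenvalues of `B^{-1/2} C B^{-1/2}` gives the tangent bound
`log det C ≤ log det B + tr (B⁻¹ (C - B))` for the concave function `log det`. At a `B` where the
gradient `-B⁻¹ + ρ (B - A)` vanishes, i.e. `ρ B - B⁻¹ = ρ A`, this yields
`f B + (ρ/2)‖C - B‖_F² ≤ f C`, so such a `B` is the unique minimizer, and any two solutions of the
equation coincide. A solution exists by functional calculus: apply to `A` the map sending `x` to
the positive root `posRoot ρ x` of `ρ t² - ρ x t - 1 = 0`.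
-/

open Matrix

noncomputable def frobNorm {p : ℕ} (M : Matrix (Fin p) (Fin p) ℝ) : ℝ :=
  Real.sqrt (∑ i, ∑ j, (M i j) ^ 2)

noncomputable def posRoot (ρ x : ℝ) : ℝ := (x + Real.sqrt (x ^ 2 + 4 / ρ)) / 2

theorem continuous_posRoot (ρ : ℝ) : Continuous (posRoot ρ) := by
  unfold posRoot
  fun_prop

theorem posRoot_pos {ρ : ℝ} (hρ : 0 < ρ) (x : ℝ) : 0 < posRoot ρ x := by
  have : |x| < Real.sqrt (x ^ 2 + 4 / ρ) := by
    rw [← Real.sqrt_sq_eq_abs]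
    exact Real.sqrt_lt_sqrt (sq_nonneg x) (by linarith [div_pos four_pos hρ])
  unfold posRoot
  linarith [neg_abs_le x]

theorem mul_posRoot_sub_inv {ρ : ℝ} (hρ : 0 < ρ) (x : ℝ) :
    ρ * posRoot ρ x - (posRoot ρ x)⁻¹ = ρ * x := by
  have hs : Real.sqrt (x ^ 2 + 4 / ρ) ^ 2 = x ^ 2 + 4 / ρ := Real.sq_sqrt (by positivity)
  have hquad : ρ * posRoot ρ x ^ 2 - ρ * x * posRoot ρ x - 1 = 0 := by
    unfold posRoot
    linear_combination ρ / 4 * hs + mul_div_cancel₀ 4 hρ.ne' / 4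
  have := (posRoot_pos hρ x).ne'
  field_simp
  linear_combination hquad

namespace Matrix

open scoped MatrixOrder

variable {n : Type*} [Fintype n] [DecidableEq n]

theorem PosDef.log_det_le_trace_sub_card_s14 {M : Matrix n n ℝ} (hM : M.PosDef) :
    Real.log M.det ≤ M.trace - Fintype.card n := by
  have hpos := hM.eigenvalues_pos
  rw [hM.isHermitian.det_eq_prod_eigenvalues, hM.isHermitian.trace_eq_sum_eigenvalues]
  simp only [RCLike.ofReal_real_eq_id, id]
  rw [Real.log_prod fun i _ => (hpos i).ne']
  calc ∑ i, Real.log (hM.isHermitian.eigenvalues i) ≤ ∑ i, (hM.isHermitian.eigenvalues i - 1) :=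
        Finset.sum_le_sum fun i _ => Real.log_le_sub_one_of_pos (hpos i)
    _ = _ := by simp [Finset.sum_sub_distrib]

theorem PosDef.log_det_le_log_det_add_trace {B C : Matrix n n ℝ} (hB : B.PosDef)
    (hC : C.PosDef) : Real.log C.det ≤ Real.log B.det + (B⁻¹ * (C - B)).trace := by
  have := hB.isUnit.invertible
  set T := CFC.sqrt B⁻¹
  have hT : T.PosDef := hB.inv.isStrictlyPositive.sqrt.posDef
  have hTT : T * T = B⁻¹ := CFC.sqrt_mul_sqrt_self _ hB.inv.posSemidef.nonneg
  have hM : (T * C * T).PosDef := by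
    simpa only [hT.isHermitian.eq] using
      hC.conjTranspose_mul_mul_same (mulVec_injective_iff_isUnit.2 hT.isUnit)
  have hdet : (T * C * T).det = C.det / B.det := by
    rw [det_mul, det_mul, mul_right_comm, ← det_mul, hTT, det_nonsing_inv,
      Ring.inverse_eq_inv', div_eq_mul_inv, mul_comm]
  have htrace : (T * C * T).trace = (B⁻¹ * (C - B)).trace + Fintype.card n := by
    rw [trace_mul_cycle, hTT, mul_sub, inv_mul_of_invertible]
    simp
  have := hM.log_det_le_trace_sub_card_s14
  rw [hdet, Real.log_div hC.det_pos.ne' hB.det_pos.ne', htrace] at this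
  linarith

theorem IsHermitian.exists_posDef_smul_sub_inv_eq {A : Matrix n n ℝ} (hA : A.IsHermitian)
    {ρ : ℝ} (hρ : 0 < ρ) : ∃ Θ : Matrix n n ℝ, Θ.PosDef ∧ ρ • Θ - Θ⁻¹ = ρ • A := by
  set g := posRoot ρ
  have hg : Continuous g := continuous_posRoot ρ
  have hg_ne : ∀ x, g x ≠ 0 := fun x => (posRoot_pos hρ x).ne'
  refine ⟨cfc g A, ((cfc_isStrictlyPositive_iff g A).2 fun x _ => posRoot_pos hρ x).posDef, ?_⟩
  calc ρ • cfc g A - (cfc g A)⁻¹ = cfc (fun x => ρ * g x - (g x)⁻¹) A := by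
        rw [nonsing_inv_eq_ringInverse, ← cfc_inv g A fun x _ => hg_ne x,
          ← cfc_const_mul ρ g A, cfc_sub (fun x => ρ * g x) (fun x => (g x)⁻¹) A
          (hg := (hg.inv₀ hg_ne).continuousOn)]
    _ = cfc (fun x => ρ * x) A := cfc_congr fun x _ => mul_posRoot_sub_inv hρ x
    _ = ρ • A := cfc_const_mul_id ρ A

end Matrix

section Frobenius

variable {p : ℕ}

theorem frobNorm_sq_eq_trace (M : Matrix (Fin p) (Fin p) ℝ) :
    frobNorm M ^ 2 = (Mᵀ * M).trace := by
  rw [frobNorm, Real.sq_sqrt (by positivity), Finset.sum_comm]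
  simp [trace, mul_apply, sq]

theorem frobNorm_eq_zero_iff {M : Matrix (Fin p) (Fin p) ℝ} : frobNorm M = 0 ↔ M = 0 := by
  rw [← sq_eq_zero_iff, frobNorm_sq_eq_trace, ← conjTranspose_eq_transpose_of_trivial,
    trace_conjTranspose_mul_self_eq_zero_iff]

theorem frobNorm_add_sq (D E : Matrix (Fin p) (Fin p) ℝ) :
    frobNorm (D + E) ^ 2 = frobNorm D ^ 2 + 2 * (Eᵀ * D).trace + frobNorm E ^ 2 := by
  have : (Dᵀ * E).trace = (Eᵀ * D).trace := by
    rw [← trace_transpose, transpose_mul, transpose_transpose]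
  simp only [frobNorm_sq_eq_trace, transpose_add, add_mul, mul_add, trace_add, this]
  ring

end Frobenius

section Objective

variable {p : ℕ} {A B C : Matrix (Fin p) (Fin p) ℝ} {ρ : ℝ}

noncomputable def admmObjective (A : Matrix (Fin p) (Fin p) ℝ) (ρ : ℝ)
    (Θ : Matrix (Fin p) (Fin p) ℝ) : ℝ :=
  -Real.log Θ.det + ρ / 2 * frobNorm (Θ - A) ^ 2

theorem admmObjective_add_le (hB : B.PosDef) (hBA : ρ • B - B⁻¹ = ρ • A) (hC : C.PosDef) :
    admmObjective A ρ B + ρ / 2 * frobNorm (C - B) ^ 2 ≤ admmObjective A ρ C := by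
  have hgrad : B⁻¹ = ρ • (B - A) := by
    rw [smul_sub, ← hBA, sub_sub_cancel]
  have hinv : B⁻¹ = ρ • (B - A)ᵀ := by
    rw [← transpose_smul, ← hgrad, transpose_nonsing_inv,
      (isHermitian_iff_isSymm.1 hB.isHermitian).eq]
  have hlog : Real.log C.det ≤ Real.log B.det + ρ * ((B - A)ᵀ * (C - B)).trace := by
    simpa only [hinv, smul_mul, trace_smul, smul_eq_mul] using
      hB.log_det_le_log_det_add_trace hC
  have hsplit := frobNorm_add_sq (C - B) (B - A)
  rw [sub_add_sub_cancel] at hsplit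
  unfold admmObjective
  rw [hsplit]
  linear_combination hlog

theorem admmObjective_le (hB : B.PosDef) (hBA : ρ • B - B⁻¹ = ρ • A) (hρ : 0 ≤ ρ)
    (hC : C.PosDef) : admmObjective A ρ B ≤ admmObjective A ρ C :=
  (le_add_of_nonneg_right (by positivity)).trans (admmObjective_add_le hB hBA hC)

theorem eq_of_admmObjective_le (hB : B.PosDef) (hBA : ρ • B - B⁻¹ = ρ • A) (hρ : 0 < ρ)
    (hC : C.PosDef) (hCB : admmObjective A ρ C ≤ admmObjective A ρ B) : C = B := by
  have hsq : ρ / 2 * frobNorm (C - B) ^ 2 ≤ 0 := by linarith [admmObjective_add_le hB hBA hC]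
  have hnorm : frobNorm (C - B) ^ 2 = 0 :=
    le_antisymm (nonpos_of_mul_nonpos_right hsq (half_pos hρ)) (sq_nonneg _)
  exact sub_eq_zero.1 (frobNorm_eq_zero_iff.1 (pow_eq_zero_iff two_ne_zero |>.1 hnorm))

end Objective

/-- for symmetric `A` and `ρ > 0`, the function
`Θ ↦ −logdet Θ + (ρ/2)‖Θ − A‖_F²` restricted to symmetric positive definite matrices has
a unique minimizer, and this minimizer is the unique symmetric positive definite `Θ`
satisfying `ρΘ − Θ⁻¹ = ρA`. -/
theorem admm_theta_update_is_minimizer {p : ℕ}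
    (A : Matrix (Fin p) (Fin p) ℝ) (hA : A.IsSymm) (ρ : ℝ) (hρ : 0 < ρ) :
    (∃! Θ : Matrix (Fin p) (Fin p) ℝ, Θ.IsSymm ∧ Θ.PosDef ∧
        ∀ Θ' : Matrix (Fin p) (Fin p) ℝ, Θ'.IsSymm → Θ'.PosDef →
          -Real.log Θ.det + ρ / 2 * (frobNorm (Θ - A)) ^ 2
            ≤ -Real.log Θ'.det + ρ / 2 * (frobNorm (Θ' - A)) ^ 2) ∧
    ∀ Θ : Matrix (Fin p) (Fin p) ℝ, Θ.IsSymm → Θ.PosDef →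
      (∀ Θ' : Matrix (Fin p) (Fin p) ℝ, Θ'.IsSymm → Θ'.PosDef →
          -Real.log Θ.det + ρ / 2 * (frobNorm (Θ - A)) ^ 2
            ≤ -Real.log Θ'.det + ρ / 2 * (frobNorm (Θ' - A)) ^ 2) →
      (ρ • Θ - Θ⁻¹ = ρ • A ∧
        ∀ Θ'' : Matrix (Fin p) (Fin p) ℝ, Θ''.IsSymm → Θ''.PosDef →
          ρ • Θ'' - Θ''⁻¹ = ρ • A → Θ'' = Θ) := by
  have hsymm {Θ : Matrix (Fin p) (Fin p) ℝ} (h : Θ.PosDef) : Θ.IsSymm :=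
    isHermitian_iff_isSymm.1 h.isHermitian
  obtain ⟨Θ₀, hpd₀, heq₀⟩ := (isHermitian_iff_isSymm.2 hA).exists_posDef_smul_sub_inv_eq hρ
  refine ⟨⟨Θ₀, ⟨hsymm hpd₀, hpd₀, fun Θ _ hpd => admmObjective_le hpd₀ heq₀ hρ.le hpd⟩, ?_⟩, ?_⟩
  · rintro Θ ⟨-, hpd, hmin⟩
    exact eq_of_admmObjective_le hpd₀ heq₀ hρ hpd (hmin Θ₀ (hsymm hpd₀) hpd₀)
  · intro Θ _ hpd hmin
    obtain rfl := eq_of_admmObjective_le hpd₀ heq₀ hρ hpd (hmin Θ₀ (hsymm hpd₀) hpd₀)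
    refine ⟨heq₀, fun Θ' hs' hpd' heq' => ?_⟩
    exact (eq_of_admmObjective_le hpd' heq' hρ hpd₀ (hmin Θ' hs' hpd')).symm
end
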